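/- For all n ≥ 1, the number of permutations of [n] avoiding both generalized patterns 1-32 and 3-12 equals 2^{n-1}. -/

import Mathlib

/-
Avoiding both 1-32 and 3-12 means that every entry after an ascent is larger than all entries
before it and every entry after a descent is smaller than all of them. Such a permutation is
determined by its word of ascents and descents, since that word decides every comparison
`π a < π b`; conversely every word of length `n - 1` is realised, by an explicit formula for the
values. Hence the avoiders are in bijection with `Fin (n - 1) → Bool`.
-/

def contains132 {n : ℕ} (π : Equiv.Perm (Fin n)) : Prop :=
  ∃ i j : ℕ, ∃ (_ : i < j) (hj : j + 1 < n),
    π ⟨i, by omega⟩ < π ⟨j + 1, hj⟩ ∧ π ⟨j + 1, hj⟩ < π ⟨j, by omega⟩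

def contains312 {n : ℕ} (π : Equiv.Perm (Fin n)) : Prop :=
  ∃ i j : ℕ, ∃ (_ : i < j) (hj : j + 1 < n),
    π ⟨j, by omega⟩ < π ⟨j + 1, hj⟩ ∧ π ⟨j + 1, hj⟩ < π ⟨i, by omega⟩

theorem Equiv.Perm.eq_of_lt_iff_lt {α : Type*} [LinearOrder α] [Finite α] {π σ : Equiv.Perm α}
    (h : ∀ a b, π a < π b ↔ σ a < σ b) : π = σ := by
  have hmono : StrictMono (σ ∘ π.symm) := fun x y hxy => by
    simpa [← h] using hxy
  ext a
  simpa using (congrFun hmono.eq_id (π a)).symm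

section MaxMinSeq

variable {α β : Type*} [LinearOrder α] [LinearOrder β] {n : ℕ}

def IsMaxMinSeq (f : Fin n → α) : Prop :=
  ∀ j (hj : j + 1 < n) i (_ : i ≤ j),
    (f ⟨j, by omega⟩ < f ⟨j + 1, hj⟩ → f ⟨i, by omega⟩ < f ⟨j + 1, hj⟩) ∧
    (f ⟨j + 1, hj⟩ < f ⟨j, by omega⟩ → f ⟨j + 1, hj⟩ < f ⟨i, by omega⟩)

def ascentWord (f : Fin n → α) : Fin (n - 1) → Bool :=
  fun k => decide (f ⟨k, by omega⟩ < f ⟨k + 1, by omega⟩)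

theorem not_contains132_and_not_contains312_iff (π : Equiv.Perm (Fin n)) :
    ¬ contains132 π ∧ ¬ contains312 π ↔ IsMaxMinSeq π := by
  constructor
  · rintro ⟨h132, h312⟩ j hj i hij
    obtain rfl | hlt := hij.eq_or_lt
    · exact ⟨id, id⟩
    have hne : π ⟨i, by omega⟩ ≠ π ⟨j + 1, hj⟩ :=
      π.injective.ne (by simp only [ne_eq, Fin.mk.injEq]; omega)
    exact ⟨fun hup => hne.lt_of_le (not_lt.mp fun hdown => h312 ⟨i, j, hlt, hj, hup, hdown⟩),
      fun hdown => hne.symm.lt_of_le (not_lt.mp fun hup => h132 ⟨i, j, hlt, hj, hup, hdown⟩)⟩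
  · intro hπ
    refine ⟨?_, ?_⟩
    · rintro ⟨i, j, hij, hj, hup, hdown⟩
      exact lt_asymm hup ((hπ j hj i hij.le).2 hdown)
    · rintro ⟨i, j, hij, hj, hup, hdown⟩
      exact lt_asymm hdown ((hπ j hj i hij.le).1 hup)

theorem IsMaxMinSeq.of_lt_iff_lt {f : Fin n → α} {g : Fin n → β} (hf : IsMaxMinSeq f)
    (h : ∀ a b, f a < f b ↔ g a < g b) : IsMaxMinSeq g := by
  simpa only [IsMaxMinSeq, h] using hf

theorem ascentWord_eq_of_lt_iff_lt {f : Fin n → α} {g : Fin n → β}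
    (h : ∀ a b, f a < f b ↔ g a < g b) : ascentWord f = ascentWord g := by
  funext k
  simp only [ascentWord, h]

theorem IsMaxMinSeq.lt_succ_iff {f : Fin n → α} (hf : IsMaxMinSeq f) (hinj : f.Injective)
    {k : ℕ} (hk : k + 1 < n) {i : ℕ} (hik : i ≤ k) :
    f ⟨i, by omega⟩ < f ⟨k + 1, hk⟩ ↔ f ⟨k, by omega⟩ < f ⟨k + 1, hk⟩ := by
  refine ⟨fun hi => ?_, (hf k hk i hik).1⟩
  have hne : f ⟨k, by omega⟩ ≠ f ⟨k + 1, hk⟩ := hinj.ne (by simp [Fin.ext_iff])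
  exact hne.lt_of_le (not_lt.mp fun hdown => lt_asymm hi ((hf k hk i hik).2 hdown))

theorem IsMaxMinSeq.lt_iff_lt_of_ascentWord_eq {f : Fin n → α} {g : Fin n → β}
    (hf : IsMaxMinSeq f) (hg : IsMaxMinSeq g) (hfi : f.Injective) (hgi : g.Injective)
    (hfg : ascentWord f = ascentWord g) (a b : Fin n) : f a < f b ↔ g a < g b := by
  have forward : ∀ a b : Fin n, a < b → (f a < f b ↔ g a < g b) := by
    intro a b hab
    have hab' : a.1 < b.1 := hab
    obtain ⟨k, hk, rfl⟩ : ∃ k, ∃ hk : k + 1 < n, b = ⟨k + 1, hk⟩ :=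
      ⟨b - 1, by omega, Fin.ext (by dsimp only; omega)⟩
    have hak : a.1 ≤ k := by dsimp only at hab'; omega
    rw [hf.lt_succ_iff hfi hk hak, hg.lt_succ_iff hgi hk hak]
    simpa [ascentWord] using congrFun hfg ⟨k, by omega⟩
  rcases lt_trichotomy a b with hab | rfl | hab
  · exact forward a b hab
  · simp
  · rw [← not_iff_not, not_lt, not_lt, (hfi.ne hab.ne).le_iff_lt, (hgi.ne hab.ne).le_iff_lt]
    exact forward b a hab

end MaxMinSeq

section MaxMinConstruction

open Finset

variable (S : ℕ → Bool) (n : ℕ)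

def descentsFrom (j : ℕ) : ℕ := #{m ∈ Ico j (n - 1) | S m = false}

/- Reading the permutation from the right, an entry that is a new minimum exceeds exactly the later
new minima, and a new maximum also exceeds the `j` entries before it; at `j = 0` both formulas
agree. -/
def maxMinValue (j : ℕ) : ℕ := if S (j - 1) then j + descentsFrom S n j else descentsFrom S n j

variable {S n}

theorem descentsFrom_le (j : ℕ) : descentsFrom S n j ≤ n - 1 - j :=
  (card_filter_le _ _).trans_eq (Nat.card_Ico _ _)

theorem descentsFrom_antitone : Antitone (descentsFrom S n) := fun _ _ hij =>
  card_le_card (filter_subset_filter _ (Ico_subset_Ico hij le_rfl))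

theorem descentsFrom_le_add (i j : ℕ) :
    descentsFrom S n i ≤ descentsFrom S n j + (j - i) := by
  have hsub : {m ∈ Ico i (n - 1) | S m = false} ⊆
      {m ∈ Ico j (n - 1) | S m = false} ∪ Ico i j := by
    intro m hm
    simp only [mem_union, mem_filter, mem_Ico] at hm ⊢
    by_cases hjm : j ≤ m
    · exact .inl ⟨⟨hjm, hm.1.2⟩, hm.2⟩
    · exact .inr (by omega)
  calc descentsFrom S n i ≤ _ := card_le_card hsub
    _ ≤ _ := card_union_le _ _
    _ = descentsFrom S n j + (j - i) := by rw [Nat.card_Ico]; rfl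

theorem descentsFrom_succ_of_ascent {j : ℕ} (hS : S j = true) :
    descentsFrom S n (j + 1) = descentsFrom S n j := by
  unfold descentsFrom
  rcases lt_or_ge j (n - 1) with hj | hj
  · rw [← insert_Ico_add_one_left_eq_Ico hj, filter_insert, if_neg (by simp [hS])]
  · rw [Ico_eq_empty (by omega), Ico_eq_empty (by omega)]

theorem descentsFrom_succ_lt_of_descent {j : ℕ} (hS : S j = false) (hj : j + 1 < n) :
    descentsFrom S n (j + 1) < descentsFrom S n j := by
  unfold descentsFrom
  rw [← insert_Ico_add_one_left_eq_Ico (by omega : j < n - 1), filter_insert,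
    if_pos hS, card_insert_of_notMem (by simp)]
  exact Nat.lt_succ_self _

theorem maxMinValue_le (j : ℕ) : maxMinValue S n j ≤ j + descentsFrom S n j := by
  unfold maxMinValue; split_ifs <;> omega

theorem descentsFrom_le_maxMinValue (j : ℕ) : descentsFrom S n j ≤ maxMinValue S n j := by
  unfold maxMinValue; split_ifs <;> omega

theorem maxMinValue_lt {j : ℕ} (hj : j < n) : maxMinValue S n j < n := by
  have h₁ : descentsFrom S n j ≤ n - 1 - j := descentsFrom_le j
  have h₂ : maxMinValue S n j ≤ j + descentsFrom S n j := maxMinValue_le j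
  omega

theorem maxMinValue_lt_succ_of_ascent {i j : ℕ} (hij : i ≤ j) (hS : S j = true) :
    maxMinValue S n i < maxMinValue S n (j + 1) := by
  have hsucc : maxMinValue S n (j + 1) = j + 1 + descentsFrom S n j := by
    simp [maxMinValue, hS, descentsFrom_succ_of_ascent hS]
  have h₁ : maxMinValue S n i ≤ i + descentsFrom S n i := maxMinValue_le i
  have h₂ : descentsFrom S n i ≤ descentsFrom S n j + (j - i) := descentsFrom_le_add i j
  omega

theorem maxMinValue_succ_lt_of_descent {i j : ℕ} (hij : i ≤ j) (hS : S j = false)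
    (hj : j + 1 < n) : maxMinValue S n (j + 1) < maxMinValue S n i :=
  calc maxMinValue S n (j + 1) = descentsFrom S n (j + 1) := by simp [maxMinValue, hS]
    _ < descentsFrom S n j := descentsFrom_succ_lt_of_descent hS hj
    _ ≤ descentsFrom S n i := descentsFrom_antitone hij
    _ ≤ maxMinValue S n i := descentsFrom_le_maxMinValue i

end MaxMinConstruction

section MaxMinPerm

variable {S : ℕ → Bool} {n : ℕ}

theorem maxMinValue_ne_of_lt {i j : ℕ} (hij : i < j) (hj : j < n) :
    maxMinValue S n i ≠ maxMinValue S n j := by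
  obtain ⟨k, rfl⟩ : ∃ k, j = k + 1 := ⟨j - 1, by omega⟩
  cases hS : S k
  · exact (maxMinValue_succ_lt_of_descent (by omega) hS hj).ne'
  · exact (maxMinValue_lt_succ_of_ascent (by omega) hS).ne

variable (S n) in
noncomputable def maxMinPerm : Equiv.Perm (Fin n) :=
  Equiv.ofBijective (fun j => ⟨maxMinValue S n j, maxMinValue_lt j.isLt⟩) <|
    Finite.injective_iff_bijective.mp fun a b hab => by
      rcases lt_trichotomy a b with h | h | h
      · exact absurd (Fin.mk.inj hab) (maxMinValue_ne_of_lt h b.isLt)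
      · exact h
      · exact absurd (Fin.mk.inj hab).symm (maxMinValue_ne_of_lt h a.isLt)

theorem maxMinPerm_lt_iff (a b : Fin n) :
    maxMinPerm S n a < maxMinPerm S n b ↔ maxMinValue S n a < maxMinValue S n b :=
  Fin.mk_lt_mk

theorem isMaxMinSeq_maxMinValue : IsMaxMinSeq fun j : Fin n => maxMinValue S n j := by
  intro j hj i hij
  cases hS : S j
  · exact ⟨fun hup => absurd hup (maxMinValue_succ_lt_of_descent le_rfl hS hj).asymm,
      fun _ => maxMinValue_succ_lt_of_descent hij hS hj⟩
  · exact ⟨fun _ => maxMinValue_lt_succ_of_ascent hij hS,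
      fun hdown => absurd hdown (maxMinValue_lt_succ_of_ascent le_rfl hS).asymm⟩

theorem ascentWord_maxMinValue :
    ascentWord (fun j : Fin n => maxMinValue S n j) = fun k : Fin (n - 1) => S k := by
  funext k
  have hk : k.1 + 1 < n := by omega
  cases hS : S k
  · simpa [ascentWord] using (maxMinValue_succ_lt_of_descent le_rfl hS hk).le
  · simpa [ascentWord] using maxMinValue_lt_succ_of_ascent le_rfl hS

theorem isMaxMinSeq_maxMinPerm : IsMaxMinSeq (maxMinPerm S n) :=
  isMaxMinSeq_maxMinValue.of_lt_iff_lt fun a b => (maxMinPerm_lt_iff a b).symm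

theorem ascentWord_maxMinPerm : ascentWord (maxMinPerm S n) = fun k : Fin (n - 1) => S k :=
  (ascentWord_eq_of_lt_iff_lt maxMinPerm_lt_iff).trans ascentWord_maxMinValue

end MaxMinPerm

theorem bijective_ascentWord_isMaxMinSeq (n : ℕ) :
    Function.Bijective fun π : {π : Equiv.Perm (Fin n) // IsMaxMinSeq π} => ascentWord π.1 := by
  refine ⟨fun π σ h => Subtype.ext (Equiv.Perm.eq_of_lt_iff_lt ?_), fun s => ?_⟩
  · exact π.2.lt_iff_lt_of_ascentWord_eq σ.2 π.1.injective σ.1.injective h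
  · let S k := if h : k < n - 1 then s ⟨k, h⟩ else true
    refine ⟨⟨maxMinPerm S n, isMaxMinSeq_maxMinPerm⟩, ?_⟩
    change ascentWord (maxMinPerm S n) = s
    rw [ascentWord_maxMinPerm]
    funext k
    simp only [S, k.isLt, dite_true]

theorem stmt10_general (n : ℕ) :
    Nat.card {π : Equiv.Perm (Fin n) // ¬ contains132 π ∧ ¬ contains312 π} = 2 ^ (n - 1) := by
  simp only [not_contains132_and_not_contains312_iff]
  rw [Nat.card_congr (Equiv.ofBijective _ (bijective_ascentWord_isMaxMinSeq n))]
  simp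

theorem stmt10 (n : ℕ) (hn : 1 ≤ n) :
    Nat.card {π : Equiv.Perm (Fin n) // ¬ contains132 π ∧ ¬ contains312 π} = 2 ^ (n - 1) :=
  stmt10_general n
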